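/- arXiv:2508.08738 — 2 statements merged into one kernel-verified Lean document; each statement's English description precedes it below -/
import Mathlib

section
/- Let λ be a nonzero complex number, β ∈ ℂ[y], and let g ∈ ℂ[y] be monic of degree n with roots α₁, …, α_n listed with multiplicity, so g = (y − α₁)⋯(y − α_n); set g_i = (y − α₁)⋯(y − α_i) for 1 ≤ i ≤ n. Inside the quotient 𝔤-module Ω(λ,β)/R_g, the subspaces R_i = R_{g_i}/R_g form a decreasing chain Ω(λ,β)/R_g ⊇ R₁ ⊇ R₂ ⊇ ⋯ ⊇ R_{n−1} ⊇ R_n = 0 of submodules, and (Ω(λ,β)/R_g)/R₁ ≅ Φ(λ,β,α₁) and R_i/R_{i+1} ≅ Φ(λ,β,α_{i+1}) as 𝔤-modules for 1 ≤ i ≤ n−1. -/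
open Polynomial

noncomputable section

/-- `ℂ[x,y]`, realized as polynomials in an outer variable `x` (= `X`) with coefficients in
`ℂ[y]`; the inner variable `y` is `C X`.  The same type also models `ℂ[s,t]`. -/
abbrev P2 : Type := Polynomial (Polynomial ℂ)

/-- the polynomial `x` -/
def xP : P2 := Polynomial.X

/-- the polynomial `y` -/
def yP : P2 := Polynomial.C Polynomial.X

/-- multiplication by a fixed polynomial, as a `ℂ`-linear operator on `ℂ[x,y]` -/
def mulOp (a : P2) : P2 →ₗ[ℂ] P2 := LinearMap.mulLeft ℂ a

/-- the substitution `f(x,y) ↦ f(x+c,y)`, as a `ℂ`-linear operator on `ℂ[x,y]` -/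
def shiftOp (c : ℂ) : P2 →ₗ[ℂ] P2 :=
  (Polynomial.taylor (Polynomial.C c)).restrictScalars ℂ

/-- `f(x,y) ↦ λ^m (x + m β(y)) f(x+m, y)` -/
def genL (lam : ℂ) (β : Polynomial ℂ) (m : ℤ) : P2 →ₗ[ℂ] P2 :=
  lam ^ m • (mulOp (xP + Polynomial.C ((m : ℂ) • β)) ∘ₗ shiftOp (m : ℂ))

/-- `f(x,y) ↦ λ^m y f(x+m, y)` -/
def genH (lam : ℂ) (m : ℤ) : P2 →ₗ[ℂ] P2 :=
  lam ^ m • (mulOp yP ∘ₗ shiftOp (m : ℂ))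

/- In everything that follows, the odd (half-integer) index `p ∈ ℤ + 1/2` is encoded by the
integer `k : ℤ` with `p = k + 1/2`. -/

/-- `L_m` on the even part `ℂ[x,y]` of `Ω(λ,β)` -/
def omegaLe (lam : ℂ) (β : Polynomial ℂ) (m : ℤ) : P2 →ₗ[ℂ] P2 := genL lam β m

/-- `L_m` on the odd part `ℂ[s,t]` of `Ω(λ,β)` -/
def omegaLo (lam : ℂ) (β : Polynomial ℂ) (m : ℤ) : P2 →ₗ[ℂ] P2 :=
  genL lam (β + Polynomial.C (1/2)) m

/-- `H_m` on either part of `Ω(λ,β)` -/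
def omegaH (lam : ℂ) (m : ℤ) : P2 →ₗ[ℂ] P2 := genH lam m

/-- `G_{k+1/2} : M₀ → M₁`, `f(x,y) ↦ λ^{p-1/2} f(s+p,t)` -/
def omegaGe (lam : ℂ) (k : ℤ) : P2 →ₗ[ℂ] P2 := lam ^ k • shiftOp ((k : ℂ) + 1/2)

/-- `G_{k+1/2} : M₁ → M₀`, `f(s,t) ↦ λ^{p+1/2} (x + 2p β(y)) f(x+p,y)` -/
def omegaGo (lam : ℂ) (β : Polynomial ℂ) (k : ℤ) : P2 →ₗ[ℂ] P2 :=
  lam ^ (k + 1) • (mulOp (xP + Polynomial.C (((2*k+1 : ℤ) : ℂ) • β)) ∘ₗ shiftOp ((k : ℂ) + 1/2))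

/-- `Q_{k+1/2} : M₀ → M₁` is the zero map -/
def omegaQe (_k : ℤ) : P2 →ₗ[ℂ] P2 := 0

/-- `Q_{k+1/2} : M₁ → M₀`, `f(s,t) ↦ λ^{p+1/2} y f(x+p,y)` -/
def omegaQo (lam : ℂ) (k : ℤ) : P2 →ₗ[ℂ] P2 :=
  lam ^ (k + 1) • (mulOp yP ∘ₗ shiftOp ((k : ℂ) + 1/2))

/-- A representation of the N=1 Heisenberg-Virasoro superalgebra `𝔤` on the `ℤ₂`-graded
complex vector space `M₀ ⊕ M₁`: operators `Le m`/`Lo m` (resp. `He`/`Ho`) are the even/odd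
components of `L_m` (resp. `H_m`), and `Ge k`/`Go k` (resp. `Qe`/`Qo`) are the two components
of the grading-reversing operator `G_{k+1/2}` (resp. `Q_{k+1/2}`); all ten super-bracket
relations are required to hold on both graded components. -/
structure GRep (M₀ M₁ : Type*) [AddCommGroup M₀] [Module ℂ M₀]
    [AddCommGroup M₁] [Module ℂ M₁] where
  Le : ℤ → M₀ →ₗ[ℂ] M₀
  Lo : ℤ → M₁ →ₗ[ℂ] M₁
  He : ℤ → M₀ →ₗ[ℂ] M₀
  Ho : ℤ → M₁ →ₗ[ℂ] M₁
  Ge : ℤ → M₀ →ₗ[ℂ] M₁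
  Go : ℤ → M₁ →ₗ[ℂ] M₀
  Qe : ℤ → M₀ →ₗ[ℂ] M₁
  Qo : ℤ → M₁ →ₗ[ℂ] M₀
  rel_LL_e : ∀ m n : ℤ, Le m ∘ₗ Le n - Le n ∘ₗ Le m = ((m : ℂ) - (n : ℂ)) • Le (m + n)
  rel_LL_o : ∀ m n : ℤ, Lo m ∘ₗ Lo n - Lo n ∘ₗ Lo m = ((m : ℂ) - (n : ℂ)) • Lo (m + n)
  rel_LH_e : ∀ m n : ℤ, Le m ∘ₗ He n - He n ∘ₗ Le m = (-(n : ℂ)) • He (m + n)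
  rel_LH_o : ∀ m n : ℤ, Lo m ∘ₗ Ho n - Ho n ∘ₗ Lo m = (-(n : ℂ)) • Ho (m + n)
  rel_LG_e : ∀ (m k : ℤ),
    Lo m ∘ₗ Ge k - Ge k ∘ₗ Le m = ((m : ℂ)/2 - ((k : ℂ) + 1/2)) • Ge (m + k)
  rel_LG_o : ∀ (m k : ℤ),
    Le m ∘ₗ Go k - Go k ∘ₗ Lo m = ((m : ℂ)/2 - ((k : ℂ) + 1/2)) • Go (m + k)
  rel_LQ_e : ∀ (m k : ℤ),
    Lo m ∘ₗ Qe k - Qe k ∘ₗ Le m = (-((m : ℂ)/2 + ((k : ℂ) + 1/2))) • Qe (m + k)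
  rel_LQ_o : ∀ (m k : ℤ),
    Le m ∘ₗ Qo k - Qo k ∘ₗ Lo m = (-((m : ℂ)/2 + ((k : ℂ) + 1/2))) • Qo (m + k)
  rel_HG_e : ∀ (m k : ℤ), Ho m ∘ₗ Ge k - Ge k ∘ₗ He m = (m : ℂ) • Qe (m + k)
  rel_HG_o : ∀ (m k : ℤ), He m ∘ₗ Go k - Go k ∘ₗ Ho m = (m : ℂ) • Qo (m + k)
  rel_GG_e : ∀ k l : ℤ, Go k ∘ₗ Ge l + Go l ∘ₗ Ge k = (2 : ℂ) • Le (k + l + 1)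
  rel_GG_o : ∀ k l : ℤ, Ge k ∘ₗ Go l + Ge l ∘ₗ Go k = (2 : ℂ) • Lo (k + l + 1)
  rel_GQ_e : ∀ k l : ℤ, Go k ∘ₗ Qe l + Qo l ∘ₗ Ge k = He (k + l + 1)
  rel_GQ_o : ∀ k l : ℤ, Ge k ∘ₗ Qo l + Qe l ∘ₗ Go k = Ho (k + l + 1)
  rel_HH_e : ∀ m n : ℤ, He m ∘ₗ He n = He n ∘ₗ He m
  rel_HH_o : ∀ m n : ℤ, Ho m ∘ₗ Ho n = Ho n ∘ₗ Ho m
  rel_HQ_e : ∀ (m k : ℤ), Ho m ∘ₗ Qe k = Qe k ∘ₗ He m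
  rel_HQ_o : ∀ (m k : ℤ), He m ∘ₗ Qo k = Qo k ∘ₗ Ho m
  rel_QQ_e : ∀ k l : ℤ, Qo k ∘ₗ Qe l + Qo l ∘ₗ Qe k = 0
  rel_QQ_o : ∀ k l : ℤ, Qe k ∘ₗ Qo l + Qe l ∘ₗ Qo k = 0

/-- evaluation of a two-variable polynomial (an element of `P2`, outer variable ↦ `A`,
inner variable ↦ `B`) at a pair of commuting operators -/
def eval2End {V : Type*} [AddCommGroup V] [Module ℂ V] (A B : Module.End ℂ V)
    (f : P2) : Module.End ℂ V :=
  Polynomial.eval₂ (Polynomial.aeval B).toRingHom A f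

/-- multiplication by a fixed polynomial on `ℂ[x]` -/
def mul1 (a : Polynomial ℂ) : Polynomial ℂ →ₗ[ℂ] Polynomial ℂ := LinearMap.mulLeft ℂ a

/-- the substitution `f(x) ↦ f(x+c)` on `ℂ[x]` -/
def tay (c : ℂ) : Polynomial ℂ →ₗ[ℂ] Polynomial ℂ := Polynomial.taylor c

/-- `f(x) ↦ λ^m (x + m c) f(x+m)` -/
def phiL (lam c : ℂ) (m : ℤ) : Polynomial ℂ →ₗ[ℂ] Polynomial ℂ :=
  lam ^ m • (mul1 (Polynomial.X + Polynomial.C ((m : ℂ) * c)) ∘ₗ tay (m : ℂ))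

/-- `f(x) ↦ λ^m b f(x+m)` -/
def phiH (lam b : ℂ) (m : ℤ) : Polynomial ℂ →ₗ[ℂ] Polynomial ℂ :=
  (lam ^ m * b) • tay (m : ℂ)

/-- `f(x) ↦ λ^{p-1/2} f(s+p)`, `p = k + 1/2` -/
def phiGe (lam : ℂ) (k : ℤ) : Polynomial ℂ →ₗ[ℂ] Polynomial ℂ :=
  lam ^ k • tay ((k : ℂ) + 1/2)

/-- `f(s) ↦ λ^{p+1/2} (x + 2 p c) f(x+p)`, `p = k + 1/2` -/
def phiGo (lam c : ℂ) (k : ℤ) : Polynomial ℂ →ₗ[ℂ] Polynomial ℂ :=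
  lam ^ (k + 1) • (mul1 (Polynomial.X + Polynomial.C (((2*k+1 : ℤ) : ℂ) * c)) ∘ₗ tay ((k : ℂ) + 1/2))

/-- `f(s) ↦ λ^{p+1/2} b f(x+p)`, `p = k + 1/2` -/
def phiQo (lam b : ℂ) (k : ℤ) : Polynomial ℂ →ₗ[ℂ] Polynomial ℂ :=
  (lam ^ (k + 1) * b) • tay ((k : ℂ) + 1/2)

/-- one graded component of `R_g`, i.e. `g(y)ℂ[x,y]` (equivalently `g(t)ℂ[s,t]`) -/
def Rg (g : Polynomial ℂ) : Submodule ℂ P2 := LinearMap.range (mulOp (Polynomial.C g))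

/-- the even component of `S_g`, i.e. `g(y)(xℂ[x,y] + yℂ[x,y])` -/
def Sg (g : Polynomial ℂ) : Submodule ℂ P2 :=
  LinearMap.range (mulOp (xP * Polynomial.C g)) ⊔ LinearMap.range (mulOp (yP * Polynomial.C g))

/-- the embedding `ℂ[x] → ℂ[x,y]` -/
def embX (f : Polynomial ℂ) : P2 := f.map Polynomial.C

/-- `f(x) ↦` class of `g'(y)·f(x)` in `ℂ[x,y]/R_g` -/
def psiMap (g g' : Polynomial ℂ) (f : Polynomial ℂ) : P2 ⧸ Rg g :=
  (Rg g).mkQ (Polynomial.C g' * embX f)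


/-- `F₀ ⊕ F₁` is a (graded) submodule of `Ω(λ,β)`: it is invariant under all the operators
`L_m`, `H_m`, `G_p`, `Q_p`. -/
def IsOmegaSub (lam : ℂ) (β : Polynomial ℂ) (F₀ F₁ : Submodule ℂ P2) : Prop :=
  (∀ m : ℤ, ∀ f ∈ F₀, omegaLe lam β m f ∈ F₀) ∧
  (∀ m : ℤ, ∀ f ∈ F₁, omegaLo lam β m f ∈ F₁) ∧
  (∀ m : ℤ, ∀ f ∈ F₀, omegaH lam m f ∈ F₀) ∧
  (∀ m : ℤ, ∀ f ∈ F₁, omegaH lam m f ∈ F₁) ∧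
  (∀ k : ℤ, ∀ f ∈ F₀, omegaGe lam k f ∈ F₁) ∧
  (∀ k : ℤ, ∀ f ∈ F₁, omegaGo lam β k f ∈ F₀) ∧
  (∀ k : ℤ, ∀ f ∈ F₀, omegaQe k f ∈ F₁) ∧
  (∀ k : ℤ, ∀ f ∈ F₁, omegaQo lam k f ∈ F₀)

/-- The subquotient `B/A` of `Ω(λ,β)` (where `A = A₀⊕A₁ ⊆ B = B₀⊕B₁` are invariant graded
subspaces) is isomorphic, as a `𝔤`-module, to `Φ(λ,β,b)`: there are linear maps
`ψ₀ : ℂ[x] → B₀`, `ψ₁ : ℂ[s] → B₁` inducing a grading-preserving bijection of `Φ(λ,β,b)`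
onto `B/A` which commutes with all the induced operators. -/
def SubquotIsoPhi (lam : ℂ) (β : Polynomial ℂ) (b : ℂ)
    (A₀ A₁ B₀ B₁ : Submodule ℂ P2) : Prop :=
  ∃ ψ₀ ψ₁ : Polynomial ℂ →ₗ[ℂ] P2,
    (∀ f, ψ₀ f ∈ B₀) ∧ (∀ f, ψ₁ f ∈ B₁) ∧
    -- injectivity modulo A
    (∀ f, ψ₀ f ∈ A₀ ↔ f = 0) ∧ (∀ f, ψ₁ f ∈ A₁ ↔ f = 0) ∧
    -- surjectivity modulo A
    (∀ v ∈ B₀, ∃ f, v - ψ₀ f ∈ A₀) ∧ (∀ v ∈ B₁, ∃ f, v - ψ₁ f ∈ A₁) ∧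
    -- commutation with all operators, modulo A
    (∀ (m : ℤ) (f : Polynomial ℂ),
      omegaLe lam β m (ψ₀ f) - ψ₀ (phiL lam (β.eval b) m f) ∈ A₀) ∧
    (∀ (m : ℤ) (f : Polynomial ℂ),
      omegaLo lam β m (ψ₁ f) - ψ₁ (phiL lam (β.eval b + 1/2) m f) ∈ A₁) ∧
    (∀ (m : ℤ) (f : Polynomial ℂ),
      omegaH lam m (ψ₀ f) - ψ₀ (phiH lam b m f) ∈ A₀) ∧
    (∀ (m : ℤ) (f : Polynomial ℂ),
      omegaH lam m (ψ₁ f) - ψ₁ (phiH lam b m f) ∈ A₁) ∧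
    (∀ (k : ℤ) (f : Polynomial ℂ),
      omegaGe lam k (ψ₀ f) - ψ₁ (phiGe lam k f) ∈ A₁) ∧
    (∀ (k : ℤ) (f : Polynomial ℂ),
      omegaGo lam β k (ψ₁ f) - ψ₀ (phiGo lam (β.eval b) k f) ∈ A₀) ∧
    (∀ (k : ℤ) (f : Polynomial ℂ), omegaQe k (ψ₀ f) ∈ A₁) ∧
    (∀ (k : ℤ) (f : Polynomial ℂ),
      omegaQo lam k (ψ₁ f) - ψ₀ (phiQo lam b k f) ∈ A₀)


section Statement11Helpers

lemma mulOp_apply' (a u : P2) : mulOp a u = a * u := rfl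

lemma shiftOp_apply' (c : ℂ) (u : P2) :
    shiftOp c u = Polynomial.taylor (Polynomial.C c) u := rfl

lemma shiftOp_C_mul (c : ℂ) (p : Polynomial ℂ) (u : P2) :
    shiftOp c (Polynomial.C p * u) = Polynomial.C p * shiftOp c u := by
  simp [shiftOp_apply', Polynomial.taylor_mul]

lemma shiftOp_embX (c : ℂ) (f : Polynomial ℂ) :
    shiftOp c (embX f) = embX (tay c f) := by
  show Polynomial.taylor (Polynomial.C c) (f.map Polynomial.C)
      = (Polynomial.taylor c f).map Polynomial.C
  rw [Polynomial.taylor_apply, Polynomial.taylor_apply, Polynomial.map_comp]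
  simp

/-- `embX` as a `ℂ`-linear map -/
def embL : Polynomial ℂ →ₗ[ℂ] P2 where
  toFun := embX
  map_add' f g := Polynomial.map_add _
  map_smul' a f := by
    show (a • f).map Polynomial.C = a • (f.map Polynomial.C)
    ext n
    simp [Polynomial.coeff_map, Polynomial.coeff_smul, Polynomial.smul_C, smul_eq_mul]

/-- the map `f(x) ↦ h(y)·f(x)` -/
def psi (h : Polynomial ℂ) : Polynomial ℂ →ₗ[ℂ] P2 := mulOp (Polynomial.C h) ∘ₗ embL

lemma psi_apply (h f : Polynomial ℂ) : psi h f = Polynomial.C h * embX f := rfl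

lemma smul_P2 (b : ℂ) (u : P2) : b • u = Polynomial.C (Polynomial.C b) * u := by
  rw [Algebra.smul_def, IsScalarTower.algebraMap_apply ℂ (Polynomial ℂ) P2]
  simp [Polynomial.algebraMap_eq]

lemma memA {b : ℂ} {d : Polynomial ℂ} (h : Polynomial ℂ)
    (hd : Polynomial.X - Polynomial.C b ∣ d) (u : P2) :
    Polynomial.C d * (Polynomial.C h * u) ∈ Rg (h * (Polynomial.X - Polynomial.C b)) := by
  obtain ⟨e, rfl⟩ := hd
  refine ⟨Polynomial.C e * u, ?_⟩
  show Polynomial.C (h * (Polynomial.X - Polynomial.C b)) * (Polynomial.C e * u)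
      = Polynomial.C ((Polynomial.X - Polynomial.C b) * e) * (Polynomial.C h * u)
  rw [Polynomial.C_mul, Polynomial.C_mul]
  ring

lemma commL (h γ : Polynomial ℂ) (b e c μ : ℂ) (f : Polynomial ℂ) :
    (μ • (mulOp (xP + Polynomial.C (e • γ)) ∘ₗ shiftOp c)) (psi h f)
      - psi h ((μ • (mul1 (Polynomial.X + Polynomial.C (e * γ.eval b)) ∘ₗ tay c)) f)
      ∈ Rg (h * (Polynomial.X - Polynomial.C b)) := by
  have hd : Polynomial.X - Polynomial.C b ∣ (e • γ - Polynomial.C (e * γ.eval b)) := by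
    have h1 : e • γ - Polynomial.C (e * γ.eval b)
        = Polynomial.C e * (γ - Polynomial.C (γ.eval b)) := by
      rw [Polynomial.smul_eq_C_mul, Polynomial.C_mul, mul_sub]
    rw [h1]
    exact Dvd.dvd.mul_left Polynomial.X_sub_C_dvd_sub_C_eval _
  have key : (μ • (mulOp (xP + Polynomial.C (e • γ)) ∘ₗ shiftOp c)) (psi h f)
      - psi h ((μ • (mul1 (Polynomial.X + Polynomial.C (e * γ.eval b)) ∘ₗ tay c)) f)
      = μ • (Polynomial.C (e • γ - Polynomial.C (e * γ.eval b))
          * (Polynomial.C h * embX (tay c f))) := by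
    simp only [LinearMap.smul_apply, LinearMap.comp_apply, map_smul, psi_apply, mulOp_apply']
    rw [shiftOp_C_mul, shiftOp_embX]
    have hm : embX (mul1 (Polynomial.X + Polynomial.C (e * γ.eval b)) (tay c f))
        = (xP + Polynomial.C (Polynomial.C (e * γ.eval b))) * embX (tay c f) := by
      show ((Polynomial.X + Polynomial.C (e * γ.eval b)) * tay c f).map Polynomial.C = _
      rw [Polynomial.map_mul, Polynomial.map_add, Polynomial.map_X, Polynomial.map_C]
      rfl
    rw [hm, ← smul_sub]
    congr 1
    rw [Polynomial.C_sub]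
    ring
  rw [key]
  exact Submodule.smul_mem _ _ (memA h hd _)

lemma commH (h : Polynomial ℂ) (b c μ : ℂ) (f : Polynomial ℂ) :
    (μ • (mulOp yP ∘ₗ shiftOp c)) (psi h f) - psi h ((μ * b) • tay c f)
      ∈ Rg (h * (Polynomial.X - Polynomial.C b)) := by
  have key : (μ • (mulOp yP ∘ₗ shiftOp c)) (psi h f) - psi h ((μ * b) • tay c f)
      = μ • (Polynomial.C (Polynomial.X - Polynomial.C b)
          * (Polynomial.C h * embX (tay c f))) := by
    simp only [LinearMap.smul_apply, LinearMap.comp_apply, map_smul, psi_apply, mulOp_apply']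
    rw [shiftOp_C_mul, shiftOp_embX, mul_smul, ← smul_sub]
    congr 1
    rw [smul_P2, Polynomial.C_sub]
    show yP * _ - _ = _
    have : yP = Polynomial.C Polynomial.X := rfl
    rw [this]
    ring
  rw [key]
  exact Submodule.smul_mem _ _ (memA h dvd_rfl _)

lemma isSub (lam : ℂ) (β g : Polynomial ℂ) : IsOmegaSub lam β (Rg g) (Rg g) := by
  have hmul : ∀ (a : P2) (c μ : ℂ) (w : P2),
      (μ • (mulOp a ∘ₗ shiftOp c)) (Polynomial.C g * w) ∈ Rg g := by
    intro a c μ w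
    refine ⟨μ • (a * shiftOp c w), ?_⟩
    show Polynomial.C g * (μ • (a * shiftOp c w)) = _
    simp only [LinearMap.smul_apply, LinearMap.comp_apply, mulOp_apply', shiftOp_C_mul]
    rw [mul_smul_comm]
    refine congrArg (μ • ·) ?_
    ring
  have hsh : ∀ (c μ : ℂ) (w : P2), (μ • shiftOp c) (Polynomial.C g * w) ∈ Rg g := by
    intro c μ w
    refine ⟨μ • shiftOp c w, ?_⟩
    show Polynomial.C g * (μ • shiftOp c w) = _
    simp only [LinearMap.smul_apply, shiftOp_C_mul]
    rw [mul_smul_comm]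
  refine ⟨?_, ?_, ?_, ?_, ?_, ?_, ?_, ?_⟩
  · rintro m f ⟨w, rfl⟩; exact hmul _ _ _ w
  · rintro m f ⟨w, rfl⟩; exact hmul _ _ _ w
  · rintro m f ⟨w, rfl⟩; exact hmul _ _ _ w
  · rintro m f ⟨w, rfl⟩; exact hmul _ _ _ w
  · rintro k f ⟨w, rfl⟩; exact hsh _ _ w
  · rintro k f ⟨w, rfl⟩; exact hmul _ _ _ w
  · rintro k f ⟨w, rfl⟩; simp only [omegaQe, LinearMap.zero_apply]; exact zero_mem _
  · rintro k f ⟨w, rfl⟩; exact hmul _ _ _ w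

lemma keyIso (lam : ℂ) (β h : Polynomial ℂ) (hh : h ≠ 0) (b : ℂ) :
    SubquotIsoPhi lam β b (Rg (h * (Polynomial.X - Polynomial.C b)))
      (Rg (h * (Polynomial.X - Polynomial.C b))) (Rg h) (Rg h) := by
  have hinj : ∀ f : Polynomial ℂ,
      psi h f ∈ Rg (h * (Polynomial.X - Polynomial.C b)) ↔ f = 0 := by
    intro f
    constructor
    · rintro ⟨q, hq⟩
      have hq' : Polynomial.C h * (Polynomial.C (Polynomial.X - Polynomial.C b) * q)
          = Polynomial.C h * embX f := by
        have hq2 : Polynomial.C (h * (Polynomial.X - Polynomial.C b)) * q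
            = Polynomial.C h * embX f := hq
        rw [Polynomial.C_mul] at hq2
        rw [← hq2]
        ring
      have hCh : (Polynomial.C h : P2) ≠ 0 := by
        simpa using hh
      have h2 := mul_left_cancel₀ hCh hq'
      ext n
      have h3 := congrArg (fun p : P2 => Polynomial.coeff p n) h2
      simp only [Polynomial.coeff_C_mul] at h3
      have h4 : (Polynomial.X - Polynomial.C b) * q.coeff n = Polynomial.C (f.coeff n) := by
        rw [h3]; show (embX f).coeff n = _
        simp [embX, Polynomial.coeff_map]
      have h5 := congrArg (Polynomial.eval b) h4
      simp at h5
      simp [← h5]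
    · rintro rfl
      have : psi h (0 : Polynomial ℂ) = 0 := map_zero _
      rw [this]
      exact zero_mem _
  have hsurj : ∀ v ∈ Rg h, ∃ f, v - psi h f ∈ Rg (h * (Polynomial.X - Polynomial.C b)) := by
    rintro v ⟨w, rfl⟩
    set f : Polynomial ℂ := w.map (Polynomial.evalRingHom b) with hf
    have hd : (Polynomial.C (Polynomial.X - Polynomial.C b) : P2) ∣ (w - embX f) := by
      rw [Polynomial.C_dvd_iff_dvd_coeff]
      intro i
      have : (w - embX f).coeff i = w.coeff i - Polynomial.C ((w.coeff i).eval b) := by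
        simp [hf, embX, Polynomial.coeff_map]
      rw [this]
      exact Polynomial.X_sub_C_dvd_sub_C_eval
    obtain ⟨q, hq⟩ := hd
    refine ⟨f, q, ?_⟩
    show Polynomial.C (h * (Polynomial.X - Polynomial.C b)) * q
        = mulOp (Polynomial.C h) w - psi h f
    rw [Polynomial.C_mul, mul_assoc, ← hq]
    show Polynomial.C h * (w - embX f) = Polynomial.C h * w - Polynomial.C h * embX f
    ring
  refine ⟨psi h, psi h, fun f => ⟨embX f, rfl⟩, fun f => ⟨embX f, rfl⟩, hinj, hinj,
    hsurj, hsurj, ?_, ?_, ?_, ?_, ?_, ?_, ?_, ?_⟩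
  · intro m f
    exact commL h β b (m : ℂ) (m : ℂ) (lam ^ m) f
  · intro m f
    have he : (β + Polynomial.C (1/2 : ℂ)).eval b = β.eval b + 1/2 := by simp
    have H := commL h (β + Polynomial.C (1/2 : ℂ)) b (m : ℂ) (m : ℂ) (lam ^ m) f
    rw [he] at H
    exact H
  · intro m f
    exact commH h b (m : ℂ) (lam ^ m) f
  · intro m f
    exact commH h b (m : ℂ) (lam ^ m) f
  · intro k f
    have key : omegaGe lam k (psi h f) = psi h (phiGe lam k f) := by
      simp only [omegaGe, phiGe, LinearMap.smul_apply, map_smul, psi_apply]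
      rw [shiftOp_C_mul, shiftOp_embX]
    rw [key, sub_self]
    exact zero_mem _
  · intro k f
    exact commL h β b ((2*k+1 : ℤ) : ℂ) ((k : ℂ) + 1/2) (lam ^ (k+1)) f
  · intro k f
    simp only [omegaQe, LinearMap.zero_apply]
    exact zero_mem _
  · intro k f
    exact commH h b ((k : ℂ) + 1/2) (lam ^ (k+1)) f

lemma Rg_one : Rg (1 : Polynomial ℂ) = ⊤ := by
  ext v
  simp only [Submodule.mem_top, iff_true]
  exact ⟨v, by show Polynomial.C 1 * v = v; simp⟩

end Statement11Helpers

/-- For a monic `g` of degree `n` with roots `α₀, …, α_{n-1}` (listed with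
multiplicity, 0-indexed), setting `gᵢ = (y-α₀)⋯(y-α_{i-1})`, the images `Rᵢ = R_{gᵢ}/R_g`
form a decreasing chain of submodules of `Ω(λ,β)/R_g` ending at `0`, with
`(Ω(λ,β)/R_g)/R₁ ≅ Φ(λ,β,α₀)` and `Rᵢ/R_{i+1} ≅ Φ(λ,β,αᵢ)` (`1 ≤ i ≤ n-1`) as `𝔤`-modules.
(The subquotients of `Ω(λ,β)/R_g` are encoded by the corresponding pairs of invariant
subspaces of `Ω(λ,β)` itself.) -/
theorem statement11 (lam : ℂ) (hlam : lam ≠ 0) (β : Polynomial ℂ)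
    (n : ℕ) (hn : 1 ≤ n) (α : ℕ → ℂ) (g : Polynomial ℂ)
    (hroots : g = ∏ j ∈ Finset.range n, (Polynomial.X - Polynomial.C (α j)))
    (gseq : ℕ → Polynomial ℂ)
    (hgseq : ∀ i, gseq i = ∏ j ∈ Finset.range i, (Polynomial.X - Polynomial.C (α j))) :
    -- each `R_{gᵢ}` is a `𝔤`-submodule, the chain decreases, and ends at `R_g` (i.e. `Rₙ = 0`)
    (∀ i ≤ n, IsOmegaSub lam β (Rg (gseq i)) (Rg (gseq i))) ∧
    (∀ i < n, Rg (gseq (i + 1)) ≤ Rg (gseq i)) ∧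
    gseq n = g ∧
    -- `(Ω(λ,β)/R_g)/R₁ ≅ Φ(λ,β,α₀)`
    SubquotIsoPhi lam β (α 0) (Rg (gseq 1)) (Rg (gseq 1)) ⊤ ⊤ ∧
    -- `Rᵢ/R_{i+1} ≅ Φ(λ,β,αᵢ)` for `1 ≤ i ≤ n-1`
    (∀ i, 1 ≤ i → i ≤ n - 1 →
      SubquotIsoPhi lam β (α i) (Rg (gseq (i + 1))) (Rg (gseq (i + 1)))
        (Rg (gseq i)) (Rg (gseq i))) := by
  have hmono : ∀ i, (gseq i).Monic := by
    intro i
    rw [hgseq]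
    exact Polynomial.monic_prod_of_monic _ _ fun j _ => Polynomial.monic_X_sub_C _
  refine ⟨fun i _ => isSub lam β _, ?_, ?_, ?_, ?_⟩
  · intro i _
    rintro v ⟨w, rfl⟩
    refine ⟨Polynomial.C (Polynomial.X - Polynomial.C (α i)) * w, ?_⟩
    show Polynomial.C (gseq i) * _ = Polynomial.C (gseq (i+1)) * w
    rw [hgseq, hgseq, Finset.prod_range_succ, Polynomial.C_mul]
    ring
  · rw [hgseq, hroots]
  · have h1 : gseq 1 = (1 : Polynomial ℂ) * (Polynomial.X - Polynomial.C (α 0)) := by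
      rw [hgseq]
      simp
    rw [h1, ← Rg_one]
    exact keyIso lam β 1 one_ne_zero (α 0)
  · intro i hi _
    have h2 : gseq (i+1) = gseq i * (Polynomial.X - Polynomial.C (α i)) := by
      rw [hgseq, hgseq, Finset.prod_range_succ]
    rw [h2]
    exact keyIso lam β (gseq i) (hmono i).ne_zero (α i)
end
end

section
/- Let λ be a nonzero complex number, β ∈ ℂ[y], and let g ∈ ℂ[y] be nonzero. Then the quotient space Ψ_hv(λ,β)/R_g^hv, regarded as a module over the polynomial ring ℂ[z] in which z acts as the operator induced by L₀, is a free module of rank deg g. Moreover, if β(0) ≠ 0, then every maximal submodule of Ψ_hv(λ,β) equals R_g^hv for some g ∈ ℂ[y] of degree 1. -/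
open Polynomial

noncomputable section

/-- a subspace of `Ψ_hv(λ,β) = ℂ[x,y]` invariant under all `L_m` and `H_m` -/
def IsHvSub (lam : ℂ) (β : Polynomial ℂ) (F : Submodule ℂ P2) : Prop :=
  (∀ m : ℤ, ∀ f ∈ F, genL lam β m f ∈ F) ∧ (∀ m : ℤ, ∀ f ∈ F, genH lam m f ∈ F)

-- basic operator computations
lemma genL_apply (lam : ℂ) (β : Polynomial ℂ) (m : ℤ) (f : P2) :
    genL lam β m f
      = lam ^ m • ((xP + Polynomial.C ((m : ℂ) • β)) *
          (Polynomial.taylor (Polynomial.C (m : ℂ)) f)) := rfl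

lemma genH_apply (lam : ℂ) (m : ℤ) (f : P2) :
    genH lam m f = lam ^ m • (yP * (Polynomial.taylor (Polynomial.C (m : ℂ)) f)) := rfl

lemma genL_zero (lam : ℂ) (β : Polynomial ℂ) (f : P2) : genL lam β 0 f = xP * f := by
  simp [genL_apply, taylor_zero]

lemma genH_zero (lam : ℂ) (f : P2) : genH lam 0 f = yP * f := by
  simp [genH_apply, taylor_zero]

lemma mem_Rg {g : Polynomial ℂ} {f : P2} : f ∈ Rg g ↔ Polynomial.C g ∣ f := by
  constructor
  · rintro ⟨h, rfl⟩; exact ⟨h, rfl⟩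
  · rintro ⟨h, rfl⟩; exact ⟨h, rfl⟩

lemma mem_Rg_coeff {g : Polynomial ℂ} {f : P2} : f ∈ Rg g ↔ ∀ n, g ∣ f.coeff n := by
  rw [mem_Rg, Polynomial.C_dvd_iff_dvd_coeff]
lemma algebraMap_P2 (a : ℂ) : algebraMap ℂ P2 a = Polynomial.C (Polynomial.C a) := by
  simp [Polynomial.algebraMap_apply]

lemma embX_mul (p q : Polynomial ℂ) : embX (p * q) = embX p * embX q := by
  simp [embX, Polynomial.map_mul]

lemma aeval_T (g : Polynomial ℂ) (T : Module.End ℂ (P2 ⧸ Rg g))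
    (hT : ∀ a : P2, T ((Rg g).mkQ a) = (Rg g).mkQ (xP * a)) (p : Polynomial ℂ) :
    ∀ a : P2, (Polynomial.aeval T p) ((Rg g).mkQ a) = (Rg g).mkQ (embX p * a) := by
  induction p using Polynomial.induction_on with
  | C c =>
      intro a
      have h1 : embX (Polynomial.C c) * a = c • a := by
        rw [embX, Polynomial.map_C, ← algebraMap_P2, ← Algebra.smul_def]
      simp [Polynomial.aeval_C, h1, Module.algebraMap_end_apply]
  | add p q hp hq =>
      intro a
      have : embX (p + q) * a = embX p * a + embX q * a := by
        simp [embX, Polynomial.map_add, add_mul]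
      rw [map_add, LinearMap.add_apply, hp a, hq a, this, map_add]
  | monomial n c ih =>
      intro a
      have h1 : Polynomial.C c * Polynomial.X ^ (n + 1)
          = Polynomial.C c * Polynomial.X ^ n * Polynomial.X := by ring
      have h2 : (Polynomial.aeval T) (Polynomial.C c * Polynomial.X ^ (n + 1))
          = (Polynomial.aeval T) (Polynomial.C c * Polynomial.X ^ n) * T := by
        rw [h1, map_mul, Polynomial.aeval_X]
      rw [h2, Module.End.mul_apply, hT a, ih (xP * a)]
      congr 1
      rw [h1]
      simp only [embX, Polynomial.map_mul, Polynomial.map_X, xP]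
      ring
lemma coeff_finsum (n : ℕ) (d : Fin n → ℂ) (i₀ : Fin n) :
    (∑ i, Polynomial.C (d i) * Polynomial.X ^ (i : ℕ)).coeff (i₀ : ℕ) = d i₀ := by
  rw [Polynomial.finset_sum_coeff, Finset.sum_eq_single i₀]
  · simp [Polynomial.coeff_C_mul, Polynomial.coeff_X_pow]
  · intro i _ hne
    have : ((i₀ : ℕ) ≠ (i : ℕ)) := fun h => hne (Fin.ext h.symm)
    simp [Polynomial.coeff_C_mul, Polynomial.coeff_X_pow, this]
  · intro h; exact absurd (Finset.mem_univ i₀) h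

lemma degree_finsum_lt (n : ℕ) (d : Fin n → ℂ) :
    (∑ i, Polynomial.C (d i) * Polynomial.X ^ (i : ℕ)).degree < (n : WithBot ℕ) := by
  have hmem : ∀ i : Fin n, Polynomial.C (d i) * Polynomial.X ^ (i : ℕ) ∈ Polynomial.degreeLT ℂ n :=
    fun i => Polynomial.mem_degreeLT.2
      (lt_of_le_of_lt (Polynomial.degree_C_mul_X_pow_le _ _) (WithBot.coe_lt_coe.2 i.isLt))
  exact Polynomial.mem_degreeLT.1 (Submodule.sum_mem _ fun i _ => hmem i)

lemma eq_sum_of_degree_lt (p : Polynomial ℂ) (n : ℕ) (h : p.degree < (n : WithBot ℕ)) :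
    p = ∑ i : Fin n, Polynomial.C (p.coeff i) * Polynomial.X ^ (i : ℕ) := by
  rw [Fin.sum_univ_eq_sum_range (fun i => Polynomial.C (p.coeff i) * Polynomial.X ^ i)]
  by_cases hp : p = 0
  · subst hp; simp
  · conv_lhs => rw [Polynomial.as_sum_range' p n ((Polynomial.natDegree_lt_iff_degree_lt hp).2 h)]
    exact Finset.sum_congr rfl fun i _ => (Polynomial.C_mul_X_pow_eq_monomial).symm

lemma part1 (lam : ℂ) (β : Polynomial ℂ) (g : Polynomial ℂ) (hg : g ≠ 0)
    (T : Module.End ℂ (P2 ⧸ Rg g))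
    (hT : ∀ a : P2, T ((Rg g).mkQ a) = (Rg g).mkQ (genL lam β 0 a)) :
    ∃ v : Fin g.natDegree → P2 ⧸ Rg g,
      Function.Bijective (fun c : Fin g.natDegree → Polynomial ℂ =>
        ∑ i, (Polynomial.aeval T (c i)) (v i)) := by
  have hT' : ∀ a : P2, T ((Rg g).mkQ a) = (Rg g).mkQ (xP * a) := fun a => by
    rw [hT a, genL_zero]
  set n := g.natDegree with hn
  refine ⟨fun i => (Rg g).mkQ (Polynomial.C (Polynomial.X ^ (i : ℕ))), ?_⟩
  set s : (Fin n → Polynomial ℂ) → P2 :=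
    fun c => ∑ i, embX (c i) * Polynomial.C (Polynomial.X ^ (i : ℕ)) with hs
  have hfun : ∀ c : Fin n → Polynomial ℂ,
      (∑ i, (Polynomial.aeval T (c i)) ((Rg g).mkQ (Polynomial.C (Polynomial.X ^ (i : ℕ)))))
        = (Rg g).mkQ (s c) := by
    intro c
    rw [hs, map_sum]
    exact Finset.sum_congr rfl fun i _ => aeval_T g T hT' (c i) _
  have hcoeff : ∀ (c : Fin n → Polynomial ℂ) (j : ℕ),
      (s c).coeff j = ∑ i, Polynomial.C ((c i).coeff j) * Polynomial.X ^ (i : ℕ) := by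
    intro c j
    rw [hs, Polynomial.finset_sum_coeff]
    exact Finset.sum_congr rfl fun i _ => by
      rw [Polynomial.coeff_mul_C, embX, Polynomial.coeff_map]
  have hdegg : g.degree = (n : WithBot ℕ) := Polynomial.degree_eq_natDegree hg
  constructor
  · intro c c' h
    have hmem : s c - s c' ∈ Rg g := by
      rw [← Submodule.Quotient.eq]
      change (Rg g).mkQ (s c) = (Rg g).mkQ (s c')
      rw [← hfun c, ← hfun c']
      exact h
    have hzero : ∀ j, (s c).coeff j - (s c').coeff j = 0 := by
      intro j
      have hdvd : g ∣ (s c - s c').coeff j := mem_Rg_coeff.1 hmem j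
      have hco : (s c - s c').coeff j = (s c).coeff j - (s c').coeff j := by
        simp [Polynomial.coeff_sub]
      have hlt : ((s c - s c').coeff j).degree < g.degree := by
        rw [hco, hcoeff, hcoeff, hdegg, ← Finset.sum_sub_distrib]
        have : (∑ i, (Polynomial.C ((c i).coeff j) * Polynomial.X ^ (i : ℕ)
            - Polynomial.C ((c' i).coeff j) * Polynomial.X ^ (i : ℕ)))
            = ∑ i, Polynomial.C ((c i).coeff j - (c' i).coeff j) * Polynomial.X ^ (i : ℕ) := by
          exact Finset.sum_congr rfl fun i _ => by rw [Polynomial.C_sub, sub_mul]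
        rw [this]
        exact degree_finsum_lt n _
      have := Polynomial.eq_zero_of_dvd_of_degree_lt hdvd hlt
      rwa [hco] at this
    funext i₀
    ext j
    have he : (∑ i, Polynomial.C ((c i).coeff j - (c' i).coeff j) * Polynomial.X ^ (i : ℕ)) = 0 := by
      have : (∑ i, Polynomial.C ((c i).coeff j - (c' i).coeff j) * Polynomial.X ^ (i : ℕ))
          = (s c).coeff j - (s c').coeff j := by
        rw [hcoeff, hcoeff, ← Finset.sum_sub_distrib]
        exact Finset.sum_congr rfl fun i _ => by rw [Polynomial.C_sub, sub_mul]
      rw [this, hzero j]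
    have h3 := coeff_finsum n (fun i => (c i).coeff j - (c' i).coeff j) i₀
    rw [he] at h3
    have : (c i₀).coeff j - (c' i₀).coeff j = 0 := by rw [← h3]; simp
    linear_combination this
  · intro q
    obtain ⟨f, rfl⟩ := Submodule.mkQ_surjective (Rg g) q
    set g1 := g * Polynomial.C (g.leadingCoeff)⁻¹ with hg1
    have hmonic : g1.Monic := Polynomial.monic_mul_leadingCoeff_inv hg
    have hdeg1 : g1.degree = g.degree := Polynomial.degree_mul_leadingCoeff_inv g hg
    set r : ℕ → Polynomial ℂ := fun j => f.coeff j %ₘ g1 with hr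
    have hrdeg : ∀ j, (r j).degree < (n : WithBot ℕ) := fun j => by
      rw [hr]
      exact lt_of_lt_of_eq (Polynomial.degree_modByMonic_lt _ hmonic) (by rw [hdeg1, hdegg])
    refine ⟨fun i => ∑ j ∈ f.support, Polynomial.C ((r j).coeff i) * Polynomial.X ^ j, ?_⟩
    beta_reduce
    rw [hfun]
    rw [Submodule.mkQ_apply, Submodule.mkQ_apply, Submodule.Quotient.eq]
    apply mem_Rg_coeff.2
    intro j
    have hsc : (s fun i => ∑ j' ∈ f.support, Polynomial.C ((r j').coeff (i : ℕ)) * Polynomial.X ^ j').coeff j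
        = if j ∈ f.support then r j else 0 := by
      rw [hcoeff]
      by_cases hjs : j ∈ f.support
      · rw [if_pos hjs]
        have hterm : ∀ i : Fin n,
            ((∑ j' ∈ f.support, Polynomial.C ((r j').coeff (i : ℕ)) * Polynomial.X ^ j').coeff j)
              = (r j).coeff (i : ℕ) := by
          intro i
          rw [Polynomial.finset_sum_coeff, Finset.sum_eq_single j]
          · simp [Polynomial.coeff_C_mul, Polynomial.coeff_X_pow]
          · intro b _ hb
            simp [Polynomial.coeff_C_mul, Polynomial.coeff_X_pow,
              (show j ≠ b from fun h => hb h.symm)]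
          · intro h; exact absurd hjs h
        rw [Finset.sum_congr rfl fun i _ => by rw [hterm i]]
        exact (eq_sum_of_degree_lt (r j) n (hrdeg j)).symm
      · rw [if_neg hjs]
        have hterm : ∀ i : Fin n,
            ((∑ j' ∈ f.support, Polynomial.C ((r j').coeff (i : ℕ)) * Polynomial.X ^ j').coeff j)
              = 0 := by
          intro i
          rw [Polynomial.finset_sum_coeff]
          exact Finset.sum_eq_zero fun b hb => by
            simp [Polynomial.coeff_C_mul, Polynomial.coeff_X_pow,
              (show j ≠ b from fun h => hjs (h ▸ hb))]
        rw [Finset.sum_congr rfl fun i _ => by rw [hterm i]]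
        simp
    rw [Polynomial.coeff_sub, hsc]
    by_cases hjs : j ∈ f.support
    · rw [if_pos hjs]
      have hmd := Polynomial.modByMonic_add_div (f.coeff j) g1
      have : r j - f.coeff j = -(g1 * (f.coeff j /ₘ g1)) := by
        rw [hr]; linear_combination hmd
      rw [this]
      exact dvd_neg.2 (dvd_mul_of_dvd_left ⟨Polynomial.C (g.leadingCoeff)⁻¹, rfl⟩ _)
    · rw [if_neg hjs, Polynomial.notMem_support_iff.1 hjs]
      simp
lemma hvSub_mul {lam : ℂ} {β : Polynomial ℂ} {F : Submodule ℂ P2} (hF : IsHvSub lam β F) :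
    ∀ (c : P2), ∀ f ∈ F, c * f ∈ F := by
  have hx : ∀ f ∈ F, xP * f ∈ F := fun f hf => by
    have := hF.1 0 f hf; rwa [genL_zero] at this
  have hy : ∀ f ∈ F, yP * f ∈ F := fun f hf => by
    have := hF.2 0 f hf; rwa [genH_zero] at this
  have hC : ∀ (a : Polynomial ℂ), ∀ f ∈ F, Polynomial.C a * f ∈ F := by
    intro a
    induction a using Polynomial.induction_on with
    | C r =>
        intro f hf
        have : Polynomial.C (Polynomial.C r) * f = r • f := by
          rw [← algebraMap_P2, ← Algebra.smul_def]
        rw [this]; exact F.smul_mem r hf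
    | add p q hp hq =>
        intro f hf
        rw [map_add, add_mul]; exact F.add_mem (hp f hf) (hq f hf)
    | monomial m r ih =>
        intro f hf
        have : Polynomial.C (Polynomial.C r * Polynomial.X ^ (m + 1)) * f
            = Polynomial.C (Polynomial.C r * Polynomial.X ^ m) * (yP * f) := by
          simp only [map_mul, yP, pow_succ]; ring
        rw [this]; exact ih _ (hy f hf)
  intro c
  induction c using Polynomial.induction_on with
  | C a => exact hC a
  | add p q hp hq => intro f hf; rw [add_mul]; exact F.add_mem (hp f hf) (hq f hf)
  | monomial m a ih =>
      intro f hf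
      have : Polynomial.C a * Polynomial.X ^ (m + 1) * f
          = Polynomial.C a * Polynomial.X ^ m * (xP * f) := by
        simp only [xP, pow_succ]; ring
      rw [this]; exact ih _ (hx f hf)

/-- the common-zero functional for a proper submodule -/
lemma exists_psi {lam : ℂ} {β : Polynomial ℂ} {F : Submodule ℂ P2}
    (hF : IsHvSub lam β F) (hne : F ≠ ⊤) :
    ∃ ψ : P2 →+* ℂ, (∀ a : ℂ, ψ (Polynomial.C (Polynomial.C a)) = a) ∧ ∀ f ∈ F, ψ f = 0 := by
  -- F as an ideal
  have h1F : (1 : P2) ∉ F := by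
    intro h1
    apply hne
    rw [Submodule.eq_top_iff']
    intro p
    simpa using hvSub_mul hF p 1 h1
  let I : Ideal P2 :=
    { carrier := F
      add_mem' := fun ha hb => F.add_mem ha hb
      zero_mem' := F.zero_mem
      smul_mem' := fun c f hf => by simpa [smul_eq_mul] using hvSub_mul hF c f hf }
  have hInt : I ≠ ⊤ := by
    rw [Ideal.ne_top_iff_one]; exact h1F
  -- the isomorphism with MvPolynomial (Fin 2) ℂ
  let e1 : MvPolynomial (Fin 1) ℂ ≃ₐ[ℂ] Polynomial ℂ :=
    (MvPolynomial.finSuccEquiv ℂ 0).trans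
      (Polynomial.mapAlgEquiv (MvPolynomial.isEmptyAlgEquiv ℂ (Fin 0)))
  let e : MvPolynomial (Fin 2) ℂ ≃ₐ[ℂ] P2 :=
    (MvPolynomial.finSuccEquiv ℂ 1).trans (Polynomial.mapAlgEquiv e1)
  let J : Ideal (MvPolynomial (Fin 2) ℂ) := I.comap (e : MvPolynomial (Fin 2) ℂ →+* P2)
  have hJ : J ≠ ⊤ := by
    rw [Ideal.ne_top_iff_one]
    intro h1
    have : e (1 : MvPolynomial (Fin 2) ℂ) ∈ I := h1
    rw [map_one] at this
    exact hInt (Ideal.eq_top_iff_one I |>.2 this)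
  obtain ⟨m, hm, hJm⟩ := Ideal.exists_le_maximal J hJ
  obtain ⟨pt, hpt⟩ := (MvPolynomial.isMaximal_iff_eq_vanishingIdeal_singleton (I := m)).1 hm
  refine ⟨(MvPolynomial.eval pt).comp (e.symm : P2 →+* MvPolynomial (Fin 2) ℂ), ?_, ?_⟩
  · intro a
    have : e.symm (Polynomial.C (Polynomial.C a)) = MvPolynomial.C a := by
      rw [← algebraMap_P2]
      have := e.symm.commutes a
      simpa using this
    simp [this]
  · intro f hf
    have hfJ : e.symm f ∈ J := by
      show e (e.symm f) ∈ I
      simpa using (show f ∈ I from hf)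
    have := hpt ▸ hJm hfJ
    exact (MvPolynomial.mem_vanishingIdeal_singleton_iff pt _).1 this
lemma hsmulC (a : ℂ) (p : P2) : a • p = Polynomial.C (Polynomial.C a) * p := by
  rw [← algebraMap_P2, ← Algebra.smul_def]

lemma psi_eval (ψ : P2 →+* ℂ) (p : P2) :
    ψ p = Polynomial.eval₂ (ψ.comp Polynomial.C) (ψ Polynomial.X) p := by
  conv_lhs => rw [← Polynomial.eval₂_C_X (p := p)]
  rw [Polynomial.hom_eval₂]

lemma rho_C (ψ : P2 →+* ℂ) (hψa : ∀ a : ℂ, ψ (Polynomial.C (Polynomial.C a)) = a) :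
    ψ.comp (Polynomial.C : Polynomial ℂ →+* P2) = Polynomial.evalRingHom (ψ yP) := by
  apply Polynomial.ringHom_ext
  · intro a; simpa using hψa a
  · simp [yP]

lemma psi_smul (ψ : P2 →+* ℂ) (hψa : ∀ a : ℂ, ψ (Polynomial.C (Polynomial.C a)) = a)
    (a : ℂ) (p : P2) : ψ (a • p) = a * ψ p := by
  rw [hsmulC, map_mul, hψa]

lemma psi_shift (ψ : P2 →+* ℂ) (hψa : ∀ a : ℂ, ψ (Polynomial.C (Polynomial.C a)) = a)
    (c : ℂ) (f : P2) :
    ψ (Polynomial.taylor (Polynomial.C c) f)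
      = (f.map (Polynomial.evalRingHom (ψ yP))).eval (ψ Polynomial.X + c) := by
  rw [Polynomial.taylor_apply, psi_eval, Polynomial.eval₂_comp, rho_C ψ hψa,
    ← Polynomial.eval₂_eq_eval_map]
  congr 1
  simp

lemma psi_C (ψ : P2 →+* ℂ) (hψa : ∀ a : ℂ, ψ (Polynomial.C (Polynomial.C a)) = a)
    (a : Polynomial ℂ) : ψ (Polynomial.C a) = a.eval (ψ yP) := by
  have := congrArg (fun φ => φ a) (rho_C ψ hψa)
  simpa using this

lemma mem_Rg_of_psi {lam : ℂ} (hlam : lam ≠ 0) {β : Polynomial ℂ} (hβ0 : β.eval 0 ≠ 0)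
    {F : Submodule ℂ P2} (hF : IsHvSub lam β F) (ψ : P2 →+* ℂ)
    (hψa : ∀ a : ℂ, ψ (Polynomial.C (Polynomial.C a)) = a) (hψ0 : ∀ f ∈ F, ψ f = 0) :
    ∀ f ∈ F, f ∈ Rg (Polynomial.X - Polynomial.C (ψ yP)) := by
  set μ := ψ yP with hμdef
  set ν := ψ (Polynomial.X : P2) with hνdef
  intro f hf
  set q : Polynomial ℂ := f.map (Polynomial.evalRingHom μ) with hq
  have hA : ∀ k : ℤ, μ * q.eval (ν + k) = 0 := by
    intro k
    have h0 := hψ0 _ (hF.2 k f hf)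
    rw [genH_apply, psi_smul ψ hψa, map_mul, psi_shift ψ hψa] at h0
    have hlk : lam ^ k ≠ 0 := zpow_ne_zero k hlam
    have := (mul_eq_zero.1 h0).resolve_left hlk
    exact this
  have hB : ∀ k : ℤ, (ν + k * β.eval μ) * q.eval (ν + k) = 0 := by
    intro k
    have h0 := hψ0 _ (hF.1 k f hf)
    rw [genL_apply, psi_smul ψ hψa, map_mul, psi_shift ψ hψa] at h0
    have hlk : lam ^ k ≠ 0 := zpow_ne_zero k hlam
    have h1 := (mul_eq_zero.1 h0).resolve_left hlk
    have h2 : ψ (xP + Polynomial.C ((k : ℂ) • β)) = ν + k * β.eval μ := by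
      rw [map_add, psi_C ψ hψa]
      simp [xP, ← hνdef, Polynomial.eval_smul, smul_eq_mul]
      exact Or.inl rfl
    rw [h2] at h1
    simpa [← hμdef, ← hνdef, ← hq] using h1
  have hinj : Function.Injective (fun k : ℤ => ν + (k : ℂ)) := by
    intro k k' h
    simp only [add_right_inj] at h
    exact_mod_cast h
  have hq0 : q = 0 := by
    apply Polynomial.eq_zero_of_infinite_isRoot
    by_cases hμ : μ = 0
    · set B : Set ℤ := {k : ℤ | ν + k * β.eval μ = 0} with hB'
      have hBsub : B.Subsingleton := by
        intro k hk k' hk'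
        simp only [hB', Set.mem_setOf_eq] at hk hk'
        have hbe : β.eval μ ≠ 0 := by rw [hμ]; exact hβ0
        have h3 : (k : ℂ) * β.eval μ = (k' : ℂ) * β.eval μ := by linear_combination hk - hk'
        have := mul_right_cancel₀ hbe h3
        exact_mod_cast this
      have hinf : ((fun k : ℤ => ν + (k : ℂ)) '' Bᶜ).Infinite :=
        Set.Infinite.image (hinj.injOn) (hBsub.finite.infinite_compl)
      apply hinf.mono
      rintro z ⟨k, hk, rfl⟩
      simp only [Set.mem_compl_iff, hB', Set.mem_setOf_eq] at hk
      exact (mul_eq_zero.1 (hB k)).resolve_left hk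
    · apply Set.infinite_of_injective_forall_mem hinj
      intro k
      exact (mul_eq_zero.1 (hA k)).resolve_left hμ
  apply mem_Rg_coeff.2
  intro j
  rw [Polynomial.dvd_iff_isRoot]
  have h4 : q.coeff j = 0 := by rw [hq0]; simp
  rw [hq, Polynomial.coeff_map] at h4
  exact h4

lemma Rg_hvSub (lam : ℂ) (β h : Polynomial ℂ) : IsHvSub lam β (Rg h) := by
  constructor <;> rintro m f ⟨p, rfl⟩
  · refine ⟨lam ^ m • ((xP + Polynomial.C ((m : ℂ) • β)) *
      (Polynomial.taylor (Polynomial.C (m : ℂ)) p)), ?_⟩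
    show Polynomial.C h * _ = genL lam β m (Polynomial.C h * p)
    rw [genL_apply, Polynomial.taylor_mul, Polynomial.taylor_C, hsmulC, hsmulC]
    ring
  · refine ⟨lam ^ m • (yP * (Polynomial.taylor (Polynomial.C (m : ℂ)) p)), ?_⟩
    show Polynomial.C h * _ = genH lam m (Polynomial.C h * p)
    rw [genH_apply, Polynomial.taylor_mul, Polynomial.taylor_C, hsmulC, hsmulC]
    ring

lemma Rg_ne_top (μ : ℂ) : Rg (Polynomial.X - Polynomial.C μ) ≠ ⊤ := by
  intro h
  have h1 : (1 : P2) ∈ Rg (Polynomial.X - Polynomial.C μ) := h ▸ trivial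
  have h2 := mem_Rg_coeff.1 h1 0
  rw [Polynomial.coeff_one_zero] at h2
  exact Polynomial.not_isUnit_X_sub_C μ (isUnit_of_dvd_one h2)
/-- For `g ≠ 0`, the quotient `Ψ_hv(λ,β)/R_g^hv` is a free module of rank
`deg g` over `ℂ[z]`, where `z` acts as the operator `T` induced by `L₀`; and if `β(0) ≠ 0`,
every maximal submodule of `Ψ_hv(λ,β)` is `R_g^hv` for some `g` of degree `1`. -/
theorem statement13 (lam : ℂ) (hlam : lam ≠ 0) (β : Polynomial ℂ)
    (g : Polynomial ℂ) (hg : g ≠ 0) :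
    (∀ T : Module.End ℂ (P2 ⧸ Rg g),
      (∀ a : P2, T ((Rg g).mkQ a) = (Rg g).mkQ (genL lam β 0 a)) →
      ∃ v : Fin g.natDegree → P2 ⧸ Rg g,
        Function.Bijective (fun c : Fin g.natDegree → Polynomial ℂ =>
          ∑ i, (Polynomial.aeval T (c i)) (v i))) ∧
    (β.eval 0 ≠ 0 →
      ∀ F : Submodule ℂ P2,
        IsHvSub lam β F → F ≠ ⊤ →
        (∀ F' : Submodule ℂ P2, IsHvSub lam β F' → F ≤ F' → F' ≠ ⊤ → F' = F) →
        ∃ g' : Polynomial ℂ, g'.natDegree = 1 ∧ F = Rg g') := by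
  constructor
  · intro T hT
    exact part1 lam β g hg T hT
  · intro hβ0 F hFsub hFne hmax
    obtain ⟨ψ, hψa, hψ0⟩ := exists_psi hFsub hFne
    refine ⟨Polynomial.X - Polynomial.C (ψ yP), Polynomial.natDegree_X_sub_C _, ?_⟩
    have hle : F ≤ Rg (Polynomial.X - Polynomial.C (ψ yP)) := fun f hf =>
      mem_Rg_of_psi hlam hβ0 hFsub ψ hψa hψ0 f hf
    exact (hmax _ (Rg_hvSub lam β _) hle (Rg_ne_top _)).symm
end
end
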